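/- arXiv:2310.08894 — 3 statements merged into one kernel-verified Lean document; each statement's English description precedes it below -/
import Mathlib

section
/- Fix K, r, n with K ≥ rn, and fix an element k ∈ [K]. The number of r-spread (cyclically) subsets J ⊆ [K] of size n containing k equals C(K - (r-1)n - 1, n - 1). -/
/-!
Rotating `[K]` by `t` preserves both cyclic distances, so the count does not depend on `k` and we
may take `k = K`. An `r`-spread set containing `K` is `K` together with an `(n - 1)`-subset of
`[r, K - r]` whose consecutive elements differ by at least `r`. Splitting on whether the top element
of an interval of length `m` is used gives Pascal's recursion for the number of such `s`-subsets,
which is therefore `C(m - (r - 1)(s - 1), s)`.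
-/

/-- The representative of `a` mod `K` in `{1, ..., K}`. -/
def cyc (K : ℕ) (a : ℤ) : ℤ := (a - 1) % (K : ℤ) + 1

/-- `J ⊆ [K]` is `r`-spread (cyclically): all pairs of distinct elements have
both cyclic distances at least `r`. -/
def rSpread (K r : ℕ) (J : Finset ℕ) : Prop :=
  J ⊆ Finset.Icc 1 K ∧ ∀ j ∈ J, ∀ j' ∈ J, j ≠ j' →
    (r : ℤ) ≤ cyc K ((j : ℤ) - (j' : ℤ)) ∧ (r : ℤ) ≤ cyc K ((j' : ℤ) - (j : ℤ))


open Finset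

lemma cyc_eq_self {K : ℕ} {x : ℤ} (h1 : 1 ≤ x) (h2 : x ≤ K) : cyc K x = x := by
  rw [cyc, Int.emod_eq_of_lt (by omega) (by omega), sub_add_cancel]

lemma cyc_modEq (K : ℕ) (x : ℤ) : cyc K x ≡ x [ZMOD K] := by
  simpa [cyc] using (Int.mod_modEq (x - 1) K).add_right 1

lemma cyc_congr {K : ℕ} {x y : ℤ} (h : x ≡ y [ZMOD K]) : cyc K x = cyc K y := by
  rw [cyc, cyc, h.sub_right 1]

lemma cyc_mem_Icc {K : ℕ} (hK : 0 < K) (x : ℤ) : 1 ≤ cyc K x ∧ cyc K x ≤ K := by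
  have := Int.emod_nonneg (x - 1) (by omega : (K : ℤ) ≠ 0)
  have := Int.emod_lt_of_pos (x - 1) (by omega : (0 : ℤ) < K)
  unfold cyc
  omega

lemma cyc_sub_of_lt {K j j' : ℕ} (hj : 1 ≤ j) (hj' : j' ≤ K) (h : j < j') :
    cyc K ((j : ℤ) - j') = K + j - j' ∧ cyc K ((j' : ℤ) - j) = j' - j := by
  refine ⟨?_, cyc_eq_self (by omega) (by omega)⟩
  rw [← cyc_congr (Int.add_modEq_right (a := (j : ℤ) - j')), cyc_eq_self (by omega) (by omega)]
  ring

lemma rSpread_iff {K r : ℕ} {J : Finset ℕ} (hJ : J ⊆ Icc 1 K) :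
    rSpread K r J ↔ ∀ j ∈ J, ∀ j' ∈ J, j < j' → j + r ≤ j' ∧ j' + r ≤ K + j := by
  have key : ∀ j ∈ J, ∀ j' ∈ J, j < j' →
      ((r ≤ cyc K ((j : ℤ) - j') ∧ r ≤ cyc K ((j' : ℤ) - j)) ↔ j + r ≤ j' ∧ j' + r ≤ K + j) := by
    intro j hj j' hj' hlt
    have hjK := mem_Icc.1 (hJ hj)
    have hj'K := mem_Icc.1 (hJ hj')
    rw [(cyc_sub_of_lt hjK.1 hj'K.2 hlt).1, (cyc_sub_of_lt hjK.1 hj'K.2 hlt).2]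
    omega
  refine ⟨fun h j hj j' hj' hlt => (key j hj j' hj' hlt).1 (h.2 j hj j' hj' hlt.ne),
    fun h => ⟨hJ, ?_⟩⟩
  intro j hj j' hj' hne
  rcases hne.lt_or_gt with hlt | hlt
  · exact (key j hj j' hj' hlt).2 (h j hj j' hj' hlt)
  · exact ((key j' hj' j hj hlt).2 (h j' hj' j hj hlt)).symm

lemma rSpread.image {K r : ℕ} {J : Finset ℕ} (hJ : rSpread K r J) {f : ℕ → ℕ}
    (hf : ∀ j ∈ Icc 1 K, f j ∈ Icc 1 K) (hmod : ∀ j j', (f j : ℤ) - f j' ≡ j - j' [ZMOD K]) :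
    rSpread K r (J.image f) := by
  refine ⟨fun x hx => ?_, fun x hx y hy hxy => ?_⟩
  · obtain ⟨j, hj, rfl⟩ := mem_image.1 hx
    exact hf j (hJ.1 hj)
  · obtain ⟨j, hj, rfl⟩ := mem_image.1 hx
    obtain ⟨j', hj', rfl⟩ := mem_image.1 hy
    rw [cyc_congr (hmod j j'), cyc_congr (hmod j' j)]
    exact hJ.2 j hj j' hj' (ne_of_apply_ne f hxy)

def rotate (K : ℕ) (t : ℤ) (j : ℕ) : ℕ := (cyc K (j + t)).toNat

section rotate

variable {K : ℕ}

lemma coe_rotate (hK : 0 < K) (t : ℤ) (j : ℕ) : (rotate K t j : ℤ) = cyc K (j + t) :=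
  Int.toNat_of_nonneg (by linarith [(cyc_mem_Icc hK (j + t)).1])

lemma rotate_mem_Icc (hK : 0 < K) (t : ℤ) (j : ℕ) : rotate K t j ∈ Icc 1 K := by
  have := coe_rotate hK t j
  have := cyc_mem_Icc hK (j + t)
  rw [mem_Icc]
  omega

lemma rotate_eq (hK : 0 < K) {t : ℤ} {j j' : ℕ} (hj' : j' ∈ Icc 1 K) (h : (j : ℤ) + t = j') :
    rotate K t j = j' := by
  have := mem_Icc.1 hj'
  rw [← Nat.cast_inj (R := ℤ), coe_rotate hK, h, cyc_eq_self (by omega) (by omega)]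

lemma rotate_rotate (hK : 0 < K) (s t : ℤ) (j : ℕ) :
    rotate K s (rotate K t j) = rotate K (t + s) j := by
  rw [rotate, coe_rotate hK, cyc_congr ((cyc_modEq K _).add_right s), add_assoc, rotate]

lemma rotate_neg_rotate (hK : 0 < K) (t : ℤ) {j : ℕ} (hj : j ∈ Icc 1 K) :
    rotate K (-t) (rotate K t j) = j := by
  rw [rotate_rotate hK, add_neg_cancel]
  exact rotate_eq hK hj (add_zero _)

lemma rotate_sub_modEq (hK : 0 < K) (t : ℤ) (j j' : ℕ) :
    (rotate K t j : ℤ) - rotate K t j' ≡ j - j' [ZMOD K] := by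
  rw [coe_rotate hK, coe_rotate hK]
  simpa using (cyc_modEq K (j + t)).sub (cyc_modEq K (j' + t))

lemma image_rotate_image_rotate (hK : 0 < K) (s t : ℤ) (J : Finset ℕ) :
    (J.image (rotate K t)).image (rotate K s) = J.image (rotate K (t + s)) := by
  rw [image_image]
  exact image_congr fun j _ => rotate_rotate hK s t j

lemma image_rotate_zero (hK : 0 < K) {J : Finset ℕ} (hJ : J ⊆ Icc 1 K) :
    J.image (rotate K 0) = J := by
  conv_rhs => rw [← image_id (s := J)]
  exact image_congr fun j hj => rotate_eq hK (hJ hj) (add_zero _)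

end rotate

def spreadSetsThrough (K r n k : ℕ) : Set (Finset ℕ) :=
  {J | rSpread K r J ∧ J.card = n ∧ k ∈ J}

lemma image_rotate_mem_spreadSetsThrough {K r n k : ℕ} (hK : 0 < K) {J : Finset ℕ}
    (hJ : J ∈ spreadSetsThrough K r n k) (t : ℤ) :
    J.image (rotate K t) ∈ spreadSetsThrough K r n (rotate K t k) := by
  obtain ⟨hsp, hcard, hk⟩ := hJ
  refine ⟨hsp.image (fun j _ => rotate_mem_Icc hK t j) (rotate_sub_modEq hK t), ?_,
    mem_image_of_mem _ hk⟩
  rw [card_image_of_injOn, hcard]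
  exact Set.LeftInvOn.injOn (f₁' := rotate K (-t)) fun j hj => rotate_neg_rotate hK t (hsp.1 hj)

lemma ncard_spreadSetsThrough_eq {K r n k k' : ℕ} (hk : k ∈ Icc 1 K) (hk' : k' ∈ Icc 1 K) :
    (spreadSetsThrough K r n k).ncard = (spreadSetsThrough K r n k').ncard := by
  have hK : 0 < K := by have := mem_Icc.1 hk; omega
  set t : ℤ := k' - k
  have rotate_k : rotate K t k = k' := rotate_eq hK hk' (by omega)
  have rotate_k' : rotate K (-t) k' = k := rotate_eq hK hk (by omega)
  refine Set.ncard_congr (fun J _ => J.image (rotate K t))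
    (fun J hJ => rotate_k ▸ image_rotate_mem_spreadSetsThrough hK hJ t)
    (fun J₁ J₂ h₁ h₂ h => ?_) (fun J' hJ' => ⟨J'.image (rotate K (-t)),
      rotate_k' ▸ image_rotate_mem_spreadSetsThrough hK hJ' (-t), ?_⟩)
  · have := congrArg (image (rotate K (-t))) h
    simp only [image_rotate_image_rotate hK, add_neg_cancel] at this
    rwa [image_rotate_zero hK h₁.1.1, image_rotate_zero hK h₂.1.1] at this
  · rw [image_rotate_image_rotate hK, neg_add_cancel, image_rotate_zero hK hJ'.1.1]

def LinearSpread (r : ℕ) (S : Finset ℕ) : Prop := ∀ x ∈ S, ∀ y ∈ S, x < y → x + r ≤ y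

instance (r : ℕ) : DecidablePred (LinearSpread r) := fun S => by
  unfold LinearSpread; infer_instance

lemma LinearSpread.mono {r : ℕ} {S T : Finset ℕ} (hS : LinearSpread r S) (h : T ⊆ S) :
    LinearSpread r T :=
  fun x hx y hy => hS x (h hx) y (h hy)

lemma LinearSpread.insert {r b : ℕ} {T : Finset ℕ} (hT : LinearSpread r T)
    (hb : ∀ x ∈ T, x + r ≤ b) : LinearSpread r (insert b T) := by
  intro x hx y hy hxy
  rw [mem_insert] at hx hy
  rcases hx with rfl | hx <;> rcases hy with rfl | hy
  · omega
  · have := hb y hy; omega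
  · exact hb x hx
  · exact hT x hx y hy hxy

section interval

variable {r a m s : ℕ}

lemma filter_linearSpread_powersetCard_succ_notMem :
    {S ∈ (Ico a (a + (m + 1))).powersetCard s | LinearSpread r S ∧ a + m ∉ S} =
      {S ∈ (Ico a (a + m)).powersetCard s | LinearSpread r S} := by
  ext S
  simp only [mem_filter, mem_powersetCard, subset_iff, mem_Ico]
  constructor
  · rintro ⟨⟨hS, hcard⟩, hsp, htop⟩
    refine ⟨⟨fun x hx => ?_, hcard⟩, hsp⟩
    have := hS hx
    have : x ≠ a + m := fun h => htop (h ▸ hx)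
    omega
  · rintro ⟨⟨hS, hcard⟩, hsp⟩
    refine ⟨⟨fun x hx => ?_, hcard⟩, hsp, fun h => ?_⟩
    · have := hS hx; omega
    · have := hS h; omega

lemma card_filter_linearSpread_powersetCard_succ_mem (hr : 0 < r) :
    #{S ∈ (Ico a (a + (m + 1))).powersetCard (s + 1) | LinearSpread r S ∧ a + m ∈ S} =
      #{T ∈ (Ico a (a + (m + 1 - r))).powersetCard s | LinearSpread r T} := by
  apply card_nbij' (fun S => S.erase (a + m)) (insert (a + m))
  · intro S hS
    simp only [coe_filter, mem_powersetCard, Set.mem_ofPred_eq, subset_iff, mem_Ico] at hS ⊢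
    obtain ⟨⟨hsub, hcard⟩, hsp, htop⟩ := hS
    refine ⟨⟨fun x hx => ?_, by rw [card_erase_of_mem htop, hcard, Nat.add_sub_cancel]⟩,
      hsp.mono (erase_subset _ _)⟩
    obtain ⟨hne, hx⟩ := mem_erase.1 hx
    have := hsub hx
    have := hsp x hx _ htop (by omega)
    omega
  · intro T hT
    simp only [coe_filter, mem_powersetCard, Set.mem_ofPred_eq, subset_iff, mem_Ico] at hT ⊢
    obtain ⟨⟨hsub, hcard⟩, hsp⟩ := hT
    have htop : a + m ∉ T := fun h => by have := hsub h; omega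
    refine ⟨⟨fun x hx => ?_, by rw [card_insert_of_notMem htop, hcard]⟩,
      hsp.insert fun x hx => ?_, mem_insert_self _ _⟩
    · rcases mem_insert.1 hx with rfl | hx
      · omega
      · have := hsub hx; omega
    · have := hsub hx; omega
  · intro S hS
    exact insert_erase (mem_filter.1 hS).2.2
  · intro T hT
    refine erase_insert fun h => ?_
    have := (mem_powersetCard.1 (mem_filter.1 hT).1).1 h
    rw [mem_Ico] at this
    omega

lemma card_linearSpread_powersetCard_succ (hr : 0 < r) :
    #{S ∈ (Ico a (a + (m + 1))).powersetCard (s + 1) | LinearSpread r S} =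
      #{S ∈ (Ico a (a + m)).powersetCard (s + 1) | LinearSpread r S} +
        #{T ∈ (Ico a (a + (m + 1 - r))).powersetCard s | LinearSpread r T} := by
  rw [← card_filter_add_card_filter_not (fun S => a + m ∈ S), add_comm, filter_filter,
    filter_filter, filter_linearSpread_powersetCard_succ_notMem,
    card_filter_linearSpread_powersetCard_succ_mem hr]

end interval

/-- Pascal's rule; it survives the truncated subtraction since both lower indices are positive. -/
lemma choose_succ_sub (m u s : ℕ) :
    (m + 1 - u).choose (s + 2) = (m - u).choose (s + 2) + (m - u).choose (s + 1) := by
  rcases le_or_gt u m with h | h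
  · rw [show m + 1 - u = m - u + 1 by omega, Nat.choose_succ_succ', add_comm]
  · simp [show m + 1 - u = 0 by omega, show m - u = 0 by omega]

theorem card_linearSpread_powersetCard {r : ℕ} (hr : 0 < r) (a m s : ℕ) :
    #{S ∈ (Ico a (a + m)).powersetCard s | LinearSpread r S} =
      (m - (r - 1) * (s - 1)).choose s := by
  induction m using Nat.strong_induction_on generalizing s with
  | _ m ih =>
  rcases s with _ | s
  · simp [filter_singleton, LinearSpread]
  rcases m with _ | m
  · simp
  rw [card_linearSpread_powersetCard_succ hr, ih m (by omega), ih (m + 1 - r) (by omega)]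
  rcases s with _ | s
  · simp
  simp only [Nat.add_sub_cancel]
  rw [show m + 1 - r - (r - 1) * s = m - (r - 1) * (s + 1) by rw [Nat.mul_succ]; omega,
    choose_succ_sub, add_comm]

/-- `Ico r (r + (K + 1 - 2 * r))` is `[r, K - r]`. -/
lemma rSpread_iff_erase {K r : ℕ} {J : Finset ℕ} (hK : 0 < K) (hr : 0 < r) (hKJ : K ∈ J) :
    rSpread K r J ↔
      J.erase K ⊆ Ico r (r + (K + 1 - 2 * r)) ∧ LinearSpread r (J.erase K) := by
  constructor
  · intro h
    have hJ := h.1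
    rw [rSpread_iff hJ] at h
    refine ⟨fun x hx => ?_, fun x hx y hy hxy =>
      (h x (mem_of_mem_erase hx) y (mem_of_mem_erase hy) hxy).1⟩
    obtain ⟨hne, hx⟩ := mem_erase.1 hx
    have := mem_Icc.1 (hJ hx)
    have := h x hx K hKJ (by omega)
    rw [mem_Ico]
    omega
  · rintro ⟨hsub, hsp⟩
    have bounds : ∀ x ∈ J, x ≠ K → r ≤ x ∧ x + r ≤ K := fun x hx hne => by
      have := mem_Ico.1 (hsub (mem_erase.2 ⟨hne, hx⟩))
      omega
    have hJ : J ⊆ Icc 1 K := fun x hx => by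
      rw [mem_Icc]
      by_cases hne : x = K
      · omega
      · have := bounds x hx hne
        omega
    rw [rSpread_iff hJ]
    intro j hj j' hj' hlt
    have hj_bounds := bounds j hj (by have := mem_Icc.1 (hJ hj'); omega)
    by_cases hj'K : j' = K
    · omega
    · have := bounds j' hj' hj'K
      have := hsp j (mem_erase.2 ⟨by omega, hj⟩) j' (mem_erase.2 ⟨hj'K, hj'⟩) hlt
      omega

lemma ncard_spreadSetsThrough_self {K r n : ℕ} (hK : 0 < K) (hr : 0 < r) (hn : 0 < n) :
    (spreadSetsThrough K r n K).ncard =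
      #{T ∈ (Ico r (r + (K + 1 - 2 * r))).powersetCard (n - 1) | LinearSpread r T} := by
  rw [← Set.ncard_coe_finset]
  refine Set.ncard_congr (fun J _ => J.erase K) (fun J hJ => ?_)
    (fun J₁ J₂ h₁ h₂ h => erase_injOn' K h₁.2.2 h₂.2.2 h) (fun T hT => ?_)
  · obtain ⟨hsp, hcard, hKJ⟩ := hJ
    obtain ⟨hsub, hT⟩ := (rSpread_iff_erase hK hr hKJ).1 hsp
    simp only [coe_filter, mem_powersetCard]
    exact ⟨⟨hsub, by rw [card_erase_of_mem hKJ, hcard]⟩, hT⟩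
  · simp only [coe_filter, mem_powersetCard] at hT
    obtain ⟨⟨hsub, hcard⟩, hsp⟩ := hT
    have hKT : K ∉ T := fun h => by have := mem_Ico.1 (hsub h); omega
    refine ⟨insert K T, ⟨?_, ?_, mem_insert_self K T⟩, erase_insert hKT⟩
    · rw [rSpread_iff_erase hK hr (mem_insert_self K T), erase_insert hKT]
      exact ⟨hsub, hsp⟩
    · rw [card_insert_of_notMem hKT, hcard]
      omega

theorem stmt1_general (K r n k : ℕ) (hr : 0 < r) (hn : 0 < n)
    (hk : k ∈ Finset.Icc 1 K) :
    {J : Finset ℕ | rSpread K r J ∧ J.card = n ∧ k ∈ J}.ncard =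
      Nat.choose (K - (r - 1) * n - 1) (n - 1) := by
  have hK : 0 < K := by have := mem_Icc.1 hk; omega
  change (spreadSetsThrough K r n k).ncard = _
  rw [ncard_spreadSetsThrough_eq hk (right_mem_Icc.2 hK), ncard_spreadSetsThrough_self hK hr hn,
    card_linearSpread_powersetCard hr]
  obtain _ | _ | n := n
  · omega
  · simp
  · congr 1
    simp only [Nat.add_sub_cancel]
    rw [show (r - 1) * (n + 1 + 1) = (r - 1) * n + 2 * (r - 1) by ring]
    omega

theorem stmt1 (K r n k : ℕ) (hK : 0 < K) (hr : 0 < r) (hn : 0 < n) (h : r * n ≤ K)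
    (hk : k ∈ Finset.Icc 1 K) :
    {J : Finset ℕ | rSpread K r J ∧ J.card = n ∧ k ∈ J}.ncard =
      Nat.choose (K - (r - 1) * n - 1) (n - 1) :=
  stmt1_general K r n k hr hn hk
end

section
/- Let K = rt + L with gcd(K,t) = 1. Pairing the (K,K,t,r) caching array C defined by C[j][k] = star for j ∈ cyclic interval [⟨(k-1)t+1⟩_K, ⟨kt⟩_K] with the delivery array D whose stars occur at D[j][k] = star for j ∈ ∪_{i ∈ [k,⟨k+r-1⟩_K]} [⟨(i-1)t+1⟩_K, ⟨it⟩_K], each column of D contains exactly rt stars and each row of D contains exactly rt stars. -/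
/-- `D[j][k] = star` iff `j` lies in the caching interval of one of the `r`
consecutive caches `k, ⟨k+1⟩_K, ..., ⟨k+r-1⟩_K`, where cache `i` covers the
cyclic interval `[⟨(i-1)t+1⟩_K, ⟨it⟩_K]`. -/
def star10 (K r t : ℕ) (j k : ℤ) : Prop :=
  ∃ a : ℕ, a < r ∧ ∃ b : ℕ, b < t ∧ j = cyc K ((cyc K (k + a) - 1) * t + 1 + b)

@[simp]
lemma intCast_cyc (K : ℕ) (a : ℤ) : ((cyc K a : ℤ) : ZMod K) = a := by
  simp [cyc, ZMod.intCast_mod]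

lemma cyc_mem_Icc_s10 {K : ℕ} (hK : 0 < K) (a : ℤ) : cyc K a ∈ Set.Icc (1 : ℤ) K := by
  have h0 := Int.emod_nonneg (a - 1) (by omega : (K : ℤ) ≠ 0)
  have h1 := Int.emod_lt_of_pos (a - 1) (by omega : (0 : ℤ) < K)
  simp only [cyc, Set.mem_Icc]
  omega

lemma injOn_intCast_Icc (K : ℕ) : Set.InjOn (Int.cast : ℤ → ZMod K) (Set.Icc 1 K) := by
  intro x hx y hy hxy
  simp only [Set.mem_Icc] at hx hy
  have h := (ZMod.intCast_eq_intCast_iff' (x - 1) (y - 1) K).mp (by push_cast; rw [hxy])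
  rw [Int.emod_eq_of_lt (by omega) (by omega), Int.emod_eq_of_lt (by omega) (by omega)] at h
  omega

lemma eq_cyc_iff {K : ℕ} {j : ℤ} (hj : j ∈ Set.Icc (1 : ℤ) K) (a : ℤ) :
    j = cyc K a ↔ (j : ZMod K) = a := by
  refine ⟨fun h => h ▸ intCast_cyc K a, fun h => injOn_intCast_Icc K hj ?_ (by simpa using h)⟩
  exact cyc_mem_Icc_s10 (by simp only [Set.mem_Icc] at hj; omega) a

lemma ncard_Icc_intCast_mem (K : ℕ) [NeZero K] (S : Finset (ZMod K)) :
    {x ∈ Set.Icc (1 : ℤ) K | (x : ZMod K) ∈ S}.ncard = S.card := by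
  rw [← Set.ncard_coe_finset, ← ((injOn_intCast_Icc K).mono (Set.sep_subset _ _)).ncard_image]
  congr 1
  ext z
  refine ⟨fun ⟨x, ⟨_, hx⟩, hxz⟩ => hxz ▸ hx, fun hz => ⟨cyc K z.cast, ?_, by simp⟩⟩
  exact ⟨cyc_mem_Icc_s10 (NeZero.pos K) _, by simpa using hz⟩

lemma card_image_affine_range {K n : ℕ} (hn : n ≤ K) (c : ZMod K) (u : (ZMod K)ˣ) :
    ((Finset.range n).image fun m : ℕ => c + u * m).card = n := by
  rw [Finset.card_image_of_injOn, Finset.card_range]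
  intro m₁ hm₁ m₂ hm₂ h
  simp only [Finset.coe_range, Set.mem_Iio] at hm₁ hm₂
  have h' := (ZMod.natCast_eq_natCast_iff' m₁ m₂ K).mp (by simpa using h)
  rwa [Nat.mod_eq_of_lt (by omega), Nat.mod_eq_of_lt (by omega)] at h'

lemma star10_iff {K r t : ℕ} {j : ℤ} (hj : j ∈ Set.Icc (1 : ℤ) K) (k : ℤ) :
    star10 K r t j k ↔ ∃ m < r * t, (j : ZMod K) = (k - 1) * t + 1 + m := by
  simp only [star10, eq_cyc_iff hj, Int.cast_add, Int.cast_mul, Int.cast_sub, intCast_cyc,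
    Int.cast_one, Int.cast_natCast]
  constructor
  · rintro ⟨a, ha, b, hb, hjab⟩
    refine ⟨a * t + b, ?_, by rw [hjab]; push_cast; ring⟩
    nlinarith
  · rintro ⟨m, hm, hjm⟩
    have ht : 0 < t := by rcases t with _ | t <;> simp_all
    refine ⟨m / t, (Nat.div_lt_iff_lt_mul ht).mpr hm, m % t, Nat.mod_lt _ ht, ?_⟩
    have hdiv : (m : ZMod K) = (m / t : ℕ) * t + (m % t : ℕ) := by
      rw [← Nat.cast_mul, ← Nat.cast_add, Nat.div_add_mod']
    rw [hjm, hdiv]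
    ring

lemma ncard_column_star10 {K r t : ℕ} [NeZero K] (hrt : r * t ≤ K) (k : ℤ) :
    {j ∈ Set.Icc (1 : ℤ) K | star10 K r t j k}.ncard = r * t := by
  rw [← card_image_affine_range hrt ((k - 1) * t + 1 : ZMod K) 1, ← ncard_Icc_intCast_mem]
  refine congrArg Set.ncard (Set.sep_ext_iff.mpr fun j hj => ?_)
  simp only [star10_iff hj, Finset.mem_image, Finset.mem_range, Units.val_one, one_mul]
  exact exists_congr fun m => and_congr_right fun _ => eq_comm

lemma ncard_row_star10 {K r t : ℕ} [NeZero K] (hrt : r * t ≤ K) (hcop : t.Coprime K)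
    {j : ℤ} (hj : j ∈ Set.Icc (1 : ℤ) K) :
    {k ∈ Set.Icc (1 : ℤ) K | star10 K r t j k}.ncard = r * t := by
  set τ := ZMod.unitOfCoprime t hcop
  have hτ : (τ : ZMod K) = t := ZMod.coe_unitOfCoprime t hcop
  rw [← card_image_affine_range hrt (((j : ZMod K) - 1) * τ⁻¹ + 1) (-τ⁻¹),
    ← ncard_Icc_intCast_mem]
  refine congrArg Set.ncard (Set.sep_ext_iff.mpr fun k _ => ?_)
  simp only [star10_iff hj, Finset.mem_image, Finset.mem_range]
  refine exists_congr fun m => and_congr_right fun _ => ?_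
  have hinv : ((τ⁻¹ : (ZMod K)ˣ) : ZMod K) * τ = 1 := Units.inv_mul τ
  rw [← hτ, Units.val_neg]
  constructor
  · intro h; linear_combination (↑τ⁻¹ : ZMod K) * h + (k - 1 : ZMod K) * hinv
  · intro h; linear_combination (τ : ZMod K) * h - ((j : ZMod K) - 1 - m) * hinv

theorem stmt10_general (K r t L : ℕ) (hL : 0 < L)
    (hK : K = r * t + L) (hgcd : Nat.gcd K t = 1) :
    -- each column of D contains exactly rt stars
    (∀ k ∈ Set.Icc (1 : ℤ) K,
      {j ∈ Set.Icc (1 : ℤ) K | star10 K r t j k}.ncard = r * t) ∧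
    -- each row of D contains exactly rt stars
    (∀ j ∈ Set.Icc (1 : ℤ) K,
      {k ∈ Set.Icc (1 : ℤ) K | star10 K r t j k}.ncard = r * t) := by
  have : NeZero K := ⟨by omega⟩
  have hrt : r * t ≤ K := by omega
  exact ⟨fun k _ => ncard_column_star10 hrt k,
    fun j hj => ncard_row_star10 hrt (Nat.coprime_comm.mp hgcd) hj⟩

theorem stmt10 (K r t L : ℕ) (hr : 0 < r) (ht : 0 < t) (hL : 0 < L)
    (hK : K = r * t + L) (hgcd : Nat.gcd K t = 1) :
    -- each column of D contains exactly rt stars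
    (∀ k ∈ Set.Icc (1 : ℤ) K,
      {j ∈ Set.Icc (1 : ℤ) K | star10 K r t j k}.ncard = r * t) ∧
    -- each row of D contains exactly rt stars
    (∀ j ∈ Set.Icc (1 : ℤ) K,
      {k ∈ Set.Icc (1 : ℤ) K | star10 K r t j k}.ncard = r * t) :=
  stmt10_general K r t L hL hK hgcd
end

section
/- Let A be a (K', L', F', Z', S') EPDA in which every integer appears exactly g times (a g-regular EPDA). Construct D = [D'; D'_1; ...; D'_{r-1}] where D' equals the array obtained by repeating each column of A r times, and D'_i is obtained from D' by cyclically shifting its columns i positions and adding i·S' to every integer entry. Then D is an rF' × rK' array in which every integer of [rS'] appears exactly rg times, no integer appears twice within a column, and every column contains exactly rZ' stars. -/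
/-- A `(K, L, F, Z, S)` EPDA: an `F × K` array over `{star} ∪ [S]`
(`none` encodes the star). -/
def IsEPDA (K L F Z S : ℕ) (A : Fin F → Fin K → Option ℕ) : Prop :=
  (∀ j k s, A j k = some s → 1 ≤ s ∧ s ≤ S) ∧
  (∀ k, ({j : Fin F | A j k = none}).ncard = Z) ∧
  (∀ s, 1 ≤ s → s ≤ S → ∃ j k, A j k = some s) ∧
  (∀ k (j j' : Fin F) s, A j k = some s → A j' k = some s → j = j') ∧
  (∀ s (j : Fin F), (∃ k, A j k = some s) →
    ({k : Fin K | (∃ j', A j' k = some s) ∧ A j k ≠ none}).ncard ≤ L)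

/-!
Index the rows of `D` by pairs (block `i`, row of `A`). In block `i`, column `c` is the copy
`(c - i) mod r` of column `⌊(c - i) / r⌋` of `A`, and `c ↦ (⌊(c - i) / r⌋, (c - i) mod r)` is a
bijection `Fin (r K') ≃ Fin K' × Fin r`. Block `i` only contains integers of `[i S' + 1, (i + 1) S']`,
so `s = s₀ + i S'` with `s₀ ∈ [1, S']` occurs only in block `i`, and there `r` times as often as
`s₀` occurs in `A`. Stars and repetitions within a column are counted block by block.
-/

open Set

lemma Nat.eq_and_eq_of_add_mul_eq {S a b i j : ℕ} (ha : a ∈ Icc 1 S) (hb : b ∈ Icc 1 S)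
    (h : a + i * S = b + j * S) : i = j ∧ a = b := by
  have quot : ∀ a i, a ∈ Icc 1 S → (a + i * S - 1) / S = i := fun a i ⟨ha1, haS⟩ => by
    rw [show a + i * S - 1 = a - 1 + i * S by omega, Nat.add_mul_div_right _ _ (by omega),
      Nat.div_eq_of_lt (by omega), zero_add]
  have hij : i = j := by rw [← quot a i ha, ← quot b j hb, h]
  subst hij
  exact ⟨rfl, by omega⟩

lemma Nat.exists_add_mul_eq {S r s : ℕ} (hs : s ∈ Icc 1 (r * S)) :
    ∃ i : Fin r, ∃ a ∈ Icc 1 S, a + i * S = s := by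
  obtain ⟨hs1, hsr⟩ := hs
  have hS : 0 < S := Nat.pos_of_ne_zero fun h => by simp [h] at hsr; omega
  refine ⟨⟨(s - 1) / S, Nat.div_lt_of_lt_mul (by rw [mul_comm]; omega)⟩, (s - 1) % S + 1,
    ⟨by omega, Nat.mod_lt _ hS⟩, ?_⟩
  have := Nat.mod_add_div' (s - 1) S
  show (s - 1) % S + 1 + (s - 1) / S * S = s
  omega

section StackedShifts

variable {α β γ : Type*} {r : ℕ} (A : α → β → Option ℕ) (S : ℕ) (col : Fin r → γ ≃ β × Fin r)

/-- The array `D` with rows indexed by (block, row of `A`); the column repetition and cyclic shift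
of block `i` are abstracted into `col i`. -/
def stackedShifts (p : Fin r × α) (c : γ) : Option ℕ :=
  (A p.2 (col p.1 c).1).map (· + p.1 * S)

variable {A S}

lemma stackedShifts_eq_some_iff {i : Fin r} {a : α} {c : γ} {s₀ : ℕ}
    (hrange : ∀ a b s, A a b = some s → s ∈ Icc 1 S) (hs₀ : s₀ ∈ Icc 1 S) (i₀ : Fin r) :
    stackedShifts A S col (i, a) c = some (s₀ + i₀ * S) ↔ i = i₀ ∧ A a (col i₀ c).1 = some s₀ := by
  simp only [stackedShifts, Option.map_eq_some_iff]
  constructor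
  · rintro ⟨s, hs, hsum⟩
    obtain ⟨hi, rfl⟩ := Nat.eq_and_eq_of_add_mul_eq (hrange _ _ _ hs) hs₀ hsum
    obtain rfl : i = i₀ := Fin.ext hi
    exact ⟨rfl, hs⟩
  · rintro ⟨rfl, hs⟩
    exact ⟨s₀, hs, rfl⟩

lemma eq_of_stackedShifts_eq_some (hrange : ∀ a b s, A a b = some s → s ∈ Icc 1 S)
    (hcol : ∀ b a a' s, A a b = some s → A a' b = some s → a = a')
    (c : γ) {p p' : Fin r × α} {s : ℕ}
    (h : stackedShifts A S col p c = some s) (h' : stackedShifts A S col p' c = some s) :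
    p = p' := by
  obtain ⟨s₀, hs₀, rfl⟩ := Option.map_eq_some_iff.mp h
  obtain ⟨hi, hs₀'⟩ := (stackedShifts_eq_some_iff col hrange (hrange _ _ _ hs₀) p.1).mp h'
  exact Prod.ext hi.symm (hcol _ _ _ _ hs₀ hs₀')

lemma ncard_stackedShifts_eq_none [Finite α] {Z : ℕ}
    (hstars : ∀ b, {a | A a b = none}.ncard = Z) (c : γ) :
    {p | stackedShifts A S col p c = none}.ncard = r * Z := by
  have e : {p | stackedShifts A S col p c = none} ≃ Σ i : Fin r, {a | A a (col i c).1 = none} :=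
    (Equiv.subtypeEquivRight fun _ => Option.map_eq_none_iff).trans
      (Equiv.subtypeProdEquivSigmaSubtype fun i a => A a (col i c).1 = none)
  rw [← Nat.card_coe_set_eq, Nat.card_congr e, Nat.card_sigma]
  simp [Nat.card_coe_set_eq, hstars]

lemma ncard_stackedShifts_eq_some {g : ℕ}
    (hrange : ∀ a b s, A a b = some s → s ∈ Icc 1 S)
    (hreg : ∀ s ∈ Icc 1 S, {q : α × β | A q.1 q.2 = some s}.ncard = g)
    {s : ℕ} (hs : s ∈ Icc 1 (r * S)) :
    {x : (Fin r × α) × γ | stackedShifts A S col x.1 x.2 = some s}.ncard = r * g := by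
  obtain ⟨i₀, s₀, hs₀, rfl⟩ := Nat.exists_add_mul_eq hs
  have hblock : {x : (Fin r × α) × γ | stackedShifts A S col x.1 x.2 = some (s₀ + i₀ * S)} =
      (fun y : α × γ => ((i₀, y.1), y.2)) '' {y | A y.1 (col i₀ y.2).1 = some s₀} := by
    ext ⟨⟨i, a⟩, c⟩
    simp [stackedShifts_eq_some_iff col hrange hs₀, and_comm, eq_comm]
  have e : {y : α × γ | A y.1 (col i₀ y.2).1 = some s₀} ≃
      {q : α × β | A q.1 q.2 = some s₀} × Fin r :=
    (((Equiv.refl α).prodCongr (col i₀)).trans (Equiv.prodAssoc α β (Fin r)).symm).subtypeEquiv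
      (fun _ => Iff.rfl) |>.trans
      (Equiv.prodSubtypeFstEquivSubtypeProd (p := fun q : α × β => A q.1 q.2 = some s₀))
  rw [hblock, Set.ncard_image_of_injective _ fun y y' h => by simpa [Prod.ext_iff] using h,
    ← Nat.card_coe_set_eq, Nat.card_congr e, Nat.card_prod, Nat.card_coe_set_eq, hreg s₀ hs₀,
    Nat.card_fin, mul_comm]

end StackedShifts

def shiftRepeatCol {r K : ℕ} [NeZero r] [NeZero K] (i : Fin r) : Fin (r * K) ≃ Fin K × Fin r :=
  (Equiv.subRight (Fin.castLE (Nat.le_mul_of_pos_right r K.pos_of_neZero) i)).trans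
    ((finCongr (mul_comm r K)).trans finProdFinEquiv.symm)

lemma shiftRepeatCol_fst_val {r K : ℕ} [NeZero r] [NeZero K] (i : Fin r) (c : Fin (r * K)) :
    ((shiftRepeatCol i c).1 : ℕ) = (c + r * K - i) % (r * K) / r := by
  have : (i : ℕ) ≤ r * K := i.isLt.le.trans (Nat.le_mul_of_pos_right r K.pos_of_neZero)
  simp only [shiftRepeatCol, Equiv.trans_apply, Equiv.subRight_apply, finProdFinEquiv_symm_apply,
    Fin.coe_divNat, finCongr_apply, Fin.val_cast, Fin.sub_def, Fin.val_castLE]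
  congr 2
  omega

theorem stmt14 (K' L' F' Z' S' g r : ℕ) (hr : 0 < r) (hF' : 0 < F')
    (hK' : 0 < K')
    (A : Fin F' → Fin K' → Option ℕ) (hA : IsEPDA K' L' F' Z' S' A)
    -- A is g-regular: every integer of [S'] appears exactly g times
    (hreg : ∀ s, 1 ≤ s → s ≤ S' →
      ({p : Fin F' × Fin K' | A p.1 p.2 = some s}).ncard = g)
    (D : Fin (r * F') → Fin (r * K') → Option ℕ)
    -- D = [D'; D'_1; ...; D'_{r-1}]: block i (rows iF'+1..(i+1)F') is the
    -- r-fold column repetition of A, with columns cyclically shifted i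
    -- positions to the right and i·S' added to every integer entry
    (hD : ∀ j k, D j k =
      (A ⟨j.val % F', Nat.mod_lt _ hF'⟩
         ⟨((k.val + r * K' - j.val / F') % (r * K')) / r,
           Nat.div_lt_of_lt_mul (Nat.mod_lt _ (Nat.mul_pos hr hK'))⟩).map
        (fun s => s + (j.val / F') * S')) :
    -- every integer of [rS'] appears exactly rg times
    (∀ s, 1 ≤ s → s ≤ r * S' →
      ({p : Fin (r * F') × Fin (r * K') | D p.1 p.2 = some s}).ncard = r * g) ∧
    -- no integer appears twice within a column
    (∀ k (j j' : Fin (r * F')) s, D j k = some s → D j' k = some s → j = j') ∧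
    -- every column contains exactly rZ' stars
    (∀ k, ({j : Fin (r * F') | D j k = none}).ncard = r * Z') := by
  obtain ⟨hrange, hstars, -, hcol, -⟩ := hA
  have := NeZero.of_pos hr
  have := NeZero.of_pos hK'
  have hD' : ∀ j k, D j k = stackedShifts A S' shiftRepeatCol (finProdFinEquiv.symm j) k := by
    intro j k
    rw [hD, stackedShifts]
    congr 2
    ext
    simp [shiftRepeatCol_fst_val]
  refine ⟨fun s hs1 hs => ?_, fun k j j' s h h' => ?_, fun k => ?_⟩
  · rw [← ncard_stackedShifts_eq_some shiftRepeatCol hrange (fun s hs => hreg s hs.1 hs.2)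
      ⟨hs1, hs⟩]
    exact Set.ncard_congr' <| (finProdFinEquiv.symm.prodCongr (Equiv.refl _)).subtypeEquiv
      fun p => by simp [hD']
  · rw [hD'] at h h'
    exact finProdFinEquiv.symm.injective (eq_of_stackedShifts_eq_some _ hrange hcol k h h')
  · rw [← ncard_stackedShifts_eq_none (S := S') shiftRepeatCol hstars k]
    exact Set.ncard_congr' <| finProdFinEquiv.symm.subtypeEquiv fun j => by simp [hD']
end
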